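/- arXiv:math/0203187 — 6 statements merged into one kernel-verified Lean document; each statement's English description precedes it below -/
import Mathlib

section
/- Let h be m-times continuously differentiable near a point x* with h(x*) = x* and h'(x*) = 0. For k < m, define h_k as the k-fold composition of h with itself (h_k = h ∘ h ∘ ... ∘ h, k times). Then h_k(x*) = x* and all derivatives of h_k at x* of order 1 through k vanish: h_k^{(i)}(x*) = 0 for 1 ≤ i ≤ k. -/
/-!
By Faà di Bruno, the `i`-th derivative of `g ∘ f` is a sum over ordered partitions of
`{0, …, i-1}` of terms `g⁽ˡ⁾(f⁽ⁱ¹⁾, …, f⁽ⁱˡ⁾)`. If `g' = 0` and the derivatives of `f` of orders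
`1, …, i-1` vanish, every term dies: either some block has size `< i`, or the partition has a
single block and the term involves `g'`. Applied to `h ∘ h^[k]` this lets the order of flatness
of `h^[k]` at the fixed point grow by one with each iteration.
-/

open Function

namespace OrderedFinpartition

lemma sum_partSize {n : ℕ} (c : OrderedFinpartition n) : ∑ m, c.partSize m = n := by
  simpa using c.sum_sigma_eq_sum (fun _ ↦ (1 : ℕ))

lemma length_eq_one_of_forall_le_partSize {n : ℕ} (c : OrderedFinpartition n) (hn : 0 < n)
    (hc : ∀ m, n ≤ c.partSize m) : c.length = 1 := by
  have hle : c.length * n ≤ 1 * n :=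
    calc c.length * n = ∑ _m : Fin c.length, n := by simp
      _ ≤ ∑ m, c.partSize m := Finset.sum_le_sum fun m _ ↦ hc m
      _ = 1 * n := by rw [c.sum_partSize, one_mul]
  have := c.length_pos hn
  have := Nat.le_of_mul_le_mul_right hle hn
  omega

end OrderedFinpartition

section

variable {𝕜 : Type*} [NontriviallyNormedField 𝕜]
  {E : Type*} [NormedAddCommGroup E] [NormedSpace 𝕜 E]
  {F : Type*} [NormedAddCommGroup F] [NormedSpace 𝕜 F]
  {G : Type*} [NormedAddCommGroup G] [NormedSpace 𝕜 G]

namespace FormalMultilinearSeries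

lemma compAlongOrderedFinpartition_eq_zero_of_partSize {n : ℕ} (q : FormalMultilinearSeries 𝕜 F G)
    (p : FormalMultilinearSeries 𝕜 E F) (c : OrderedFinpartition n) {m : Fin c.length}
    (hm : p (c.partSize m) = 0) : q.compAlongOrderedFinpartition p c = 0 := by
  ext v
  rw [compAlongOrderedFinpartition_apply]
  refine ((q c.length).map_coord_zero m ?_).trans (by simp)
  simp [c.applyOrderedFinpartition_apply, hm]

lemma compAlongOrderedFinpartition_eq_zero_of_length {n : ℕ} (q : FormalMultilinearSeries 𝕜 F G)
    (p : FormalMultilinearSeries 𝕜 E F) (c : OrderedFinpartition n)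
    (hq : q c.length = 0) : q.compAlongOrderedFinpartition p c = 0 := by
  ext v
  simp [compAlongOrderedFinpartition_apply, hq]

lemma taylorComp_eq_zero {q : FormalMultilinearSeries 𝕜 F G} {p : FormalMultilinearSeries 𝕜 E F}
    {n : ℕ} (hn : 0 < n) (hq : q 1 = 0) (hp : ∀ l, 0 < l → l < n → p l = 0) :
    q.taylorComp p n = 0 := by
  refine Finset.sum_eq_zero fun c _ ↦ ?_
  by_cases hc : ∃ m, c.partSize m < n
  · obtain ⟨m, hm⟩ := hc
    exact q.compAlongOrderedFinpartition_eq_zero_of_partSize p c (hp _ (c.partSize_pos m) hm)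
  · push Not at hc
    have hlen := c.length_eq_one_of_forall_le_partSize hn hc
    exact q.compAlongOrderedFinpartition_eq_zero_of_length p c (by rw [hlen]; exact hq)

end FormalMultilinearSeries

variable {n : WithTop ℕ∞}

theorem iteratedFDeriv_comp_eq_zero {g : F → G} {f : E → F} {x : E} {i : ℕ}
    (hg : ContDiffAt 𝕜 n g (f x)) (hf : ContDiffAt 𝕜 n f x) (hin : i ≤ n)
    (hg' : fderiv 𝕜 g (f x) = 0) (hf' : ∀ l, 0 < l → l < i → iteratedFDeriv 𝕜 l f x = 0)
    (hi : 0 < i) : iteratedFDeriv 𝕜 i (g ∘ f) x = 0 := by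
  rw [iteratedFDeriv_comp hg hf hin]
  refine FormalMultilinearSeries.taylorComp_eq_zero hi ?_ hf'
  rw [← norm_eq_zero]
  simp [ftaylorSeries, hg']

theorem ContDiffAt.iterate_of_isFixedPt {h : E → E} {x : E} (hh : ContDiffAt 𝕜 n h x)
    (hx : IsFixedPt h x) (k : ℕ) : ContDiffAt 𝕜 n h^[k] x := by
  induction k with
  | zero => exact contDiffAt_id
  | succ k ih =>
    rw [iterate_succ']
    exact ((hx.iterate k).symm ▸ hh).comp x ih

theorem iteratedFDeriv_iterate_eq_zero {h : E → E} {x : E} (hh : ContDiffAt 𝕜 n h x)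
    (hx : IsFixedPt h x) (hcrit : fderiv 𝕜 h x = 0) {k i : ℕ} (hi : 0 < i) (hik : i ≤ k)
    (hin : i ≤ n) : iteratedFDeriv 𝕜 i h^[k] x = 0 := by
  induction k generalizing i with
  | zero => omega
  | succ k ih =>
    have hxk : h^[k] x = x := hx.iterate k
    rw [iterate_succ']
    refine iteratedFDeriv_comp_eq_zero (by rwa [hxk]) (hh.iterate_of_isFixedPt hx k) hin
      (by rwa [hxk]) (fun l hl hli ↦ ih hl (by omega) ?_) hi
    exact le_trans (by exact_mod_cast hli.le) hin

end

/-- the `k`-fold iterate of an accelerator is at least a `k`-accelerator. -/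
theorem stmt_1 (m k : ℕ) (hk : k < m) (xs : ℝ) (h : ℝ → ℝ)
    (hsm : ContDiffAt ℝ (m : ℕ∞) h xs) (hfix : h xs = xs) (hd : deriv h xs = 0) :
    h^[k] xs = xs ∧ ∀ i, 1 ≤ i → i ≤ k → iteratedDeriv i (h^[k]) xs = 0 := by
  have hcrit : fderiv ℝ h xs = 0 := by
    rw [← toSpanSingleton_deriv, hd, ContinuousLinearMap.toSpanSingleton_zero]
  refine ⟨iterate_fixed hfix k, fun i hi hik ↦ ?_⟩
  have him : (i : WithTop ℕ∞) ≤ (m : ℕ∞) := by exact_mod_cast hik.trans hk.le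
  rw [iteratedDeriv_eq_iteratedFDeriv,
    iteratedFDeriv_iterate_eq_zero hsm hfix hcrit hi hik him]
  rfl
end

section
/- Let u, v : ℝ → ℝ with a common fixed point x*, where u is C^1 near x* with u(x*) = x*, u'(x*) = 1, and v is C^2 near x* with v(x*) = x* and v'(x*) ≠ 1. Define the combined iteration function h(x) = (v(x) - u(x)·v'(x)) / (1 - v'(x)). Then h(x*) = x* and h'(x*) = 0. -/
/-! At `x*` the numerator `N = v - u v'` and the denominator `D = 1 - v'` of `h` have
derivatives `N' = -x* v''` and `D' = -v''`, and `h(x*) = x*`, so the quotient rule gives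
`h'(x*) = (N' - h(x*) D') / D = (-x* v'' + x* v'') / D = 0`. -/

theorem hasDerivAt_combined_zero {u v w : ℝ → ℝ} {x : ℝ}
    (hu : HasDerivAt u 1 x) (hv : HasDerivAt v (w x) x) (hw : DifferentiableAt ℝ w x)
    (hux : u x = x) (hvx : v x = x) (hw1 : w x ≠ 1) :
    HasDerivAt (fun y => (v y - u y * w y) / (1 - w y)) 0 x := by
  have hden : 1 - w x ≠ 0 := sub_ne_zero.mpr hw1.symm
  have hw' := hw.hasDerivAt
  refine ((hv.sub (hu.mul hw')).div ((hasDerivAt_const x 1).sub hw') hden).congr_deriv ?_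
  simp only [Pi.sub_apply, Pi.mul_apply, hux, hvx]
  field_simp
  ring

/-- the combined iteration function `C(u,v)` has a superattracting
fixed point at `x*`. -/
theorem stmt_2 (xs : ℝ) (u v h : ℝ → ℝ)
    (hu : ContDiffAt ℝ 1 u xs) (hv : ContDiffAt ℝ 2 v xs)
    (hufix : u xs = xs) (hu1 : deriv u xs = 1)
    (hvfix : v xs = xs) (hv1 : deriv v xs ≠ 1)
    (hh : ∀ x, h x = (v x - u x * deriv v x) / (1 - deriv v x)) :
    h xs = xs ∧ deriv h xs = 0 := by
  have hden : 1 - deriv v xs ≠ 0 := sub_ne_zero.mpr hv1.symm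
  have hu' : HasDerivAt u 1 xs := hu1 ▸ (hu.differentiableAt one_ne_zero).hasDerivAt
  have hv' : HasDerivAt v (deriv v xs) xs := (hv.differentiableAt two_ne_zero).hasDerivAt
  have hv'' : DifferentiableAt ℝ (deriv v) xs :=
    (hv.derivWithin (m := 1) (by norm_num)).differentiableAt one_ne_zero
  refine ⟨?_, ?_⟩
  · rw [hh, hufix, hvfix]
    field_simp
  · rw [funext hh]
    exact (hasDerivAt_combined_zero hu' hv' hv'' hufix hvfix hv1).deriv
end

section
/- Let ū : ℝ → ℝ be C^3 near a fixed point x* with ū(x*) = x*, ū'(x*) = 1, and ū''(x*) = α ≠ 0. Set φ(x) = ū(x) - ū'(x) + 1 and h(x) = (φ(x) - x·φ'(x)) / (1 - φ'(x)). Then h(x*) = x* and h'(x*) = 0, i.e. h is an accelerator of ū. -/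
/-!
`C(·, v)` is the tangent-line step of Newton's method applied to `x ↦ v x - x`. Its numerator
`v - x v'` and denominator `1 - v'` have derivatives `-x v''` and `-v''`, so by the quotient rule
`C(·, v)' = v'' (v - x) / (1 - v')²`, which vanishes wherever `v` has a fixed point with `v' ≠ 1`.
For `φ = ū - ū' + 1` one finds `φ(x*) = x*` and `φ'(x*) = 1 - α ≠ 1`.
-/

noncomputable def combinedIteration (v : ℝ → ℝ) (x : ℝ) : ℝ :=
  (v x - x * deriv v x) / (1 - deriv v x)

theorem combinedIteration_eq_self {v : ℝ → ℝ} {x : ℝ} (hfix : v x = x) (hne : deriv v x ≠ 1) :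
    combinedIteration v x = x := by
  have : 1 - deriv v x ≠ 0 := sub_ne_zero.mpr hne.symm
  rw [combinedIteration, hfix, div_eq_iff this]
  ring

theorem hasDerivAt_combinedIteration {v : ℝ → ℝ} {x b : ℝ} (hv : DifferentiableAt ℝ v x)
    (hv' : HasDerivAt (deriv v) b x) (hne : deriv v x ≠ 1) :
    HasDerivAt (combinedIteration v) (b * (v x - x) / (1 - deriv v x) ^ 2) x := by
  have hnum : HasDerivAt (fun y => v y - y * deriv v y) (-(x * b)) x :=
    (hv.hasDerivAt.fun_sub ((hasDerivAt_id' x).fun_mul hv')).congr_deriv (by ring)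
  have hden : HasDerivAt (fun y => 1 - deriv v y) (-b) x := by
    simpa using hv'.const_sub 1
  exact (hnum.fun_div hden (sub_ne_zero.mpr hne.symm)).congr_deriv (by ring)

theorem ContDiffAt.hasDerivAt_combinedIteration_zero {v : ℝ → ℝ} {x : ℝ}
    (hv : ContDiffAt ℝ 2 v x) (hfix : v x = x) (hne : deriv v x ≠ 1) :
    HasDerivAt (combinedIteration v) 0 x := by
  have hv' : DifferentiableAt ℝ (deriv v) x :=
    (hv.derivWithin (m := 1) (by norm_num)).differentiableAt (by norm_num)
  simpa [hfix] using
    hasDerivAt_combinedIteration (hv.differentiableAt (by norm_num)) hv'.hasDerivAt hne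

/-- `h = C(x, φ)` with `φ(x) = ū(x) - ū'(x) + 1` is an accelerator of `ū`. -/
theorem stmt_5 (xs α : ℝ) (hα : α ≠ 0) (u φ h : ℝ → ℝ)
    (hu : ContDiffAt ℝ 3 u xs) (hfix : u xs = xs) (hu1 : deriv u xs = 1)
    (hu2 : iteratedDeriv 2 u xs = α)
    (hφ : ∀ x, φ x = u x - deriv u x + 1)
    (hh : ∀ x, h x = (φ x - x * deriv φ x) / (1 - deriv φ x)) :
    h xs = xs ∧ deriv h xs = 0 := by
  obtain rfl : φ = fun x => u x - deriv u x + 1 := funext hφ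
  obtain rfl : h = combinedIteration (fun x => u x - deriv u x + 1) := funext hh
  have hu' : ContDiffAt ℝ 2 (deriv u) xs := hu.derivWithin (by norm_num)
  have hφ_smooth : ContDiffAt ℝ 2 (fun x => u x - deriv u x + 1) xs :=
    ((hu.of_le (by norm_num)).sub hu').add contDiffAt_const
  have hφ_fix : u xs - deriv u xs + 1 = xs := by rw [hfix, hu1]; ring
  have hφ_deriv : deriv (fun x => u x - deriv u x + 1) xs = 1 - α := by
    rw [(((hu.differentiableAt (by norm_num)).hasDerivAt.fun_sub
      (hu'.differentiableAt (by norm_num)).hasDerivAt).add_const 1).deriv, hu1, ← hu2,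
      iteratedDeriv_succ, iteratedDeriv_one]
  have hne : deriv (fun x => u x - deriv u x + 1) xs ≠ 1 := by
    rw [hφ_deriv]; exact fun heq => hα (by linarith)
  exact ⟨combinedIteration_eq_self hφ_fix hne,
    (hφ_smooth.hasDerivAt_combinedIteration_zero hφ_fix hne).deriv⟩
end

section
/- Let u : ℝ → ℝ be C^m near x* with u(x*) = x*, u'(x*) = 1, u^{(j)}(x*) = 0 for 2 ≤ j ≤ m-1, and u^{(m)}(x*) = α ≠ 0, where m ≥ 2. Define v(x) = (u(x) - x·u'(x)) / (1 - u'(x)) for x ≠ x* and v(x*) = x*. Then v is differentiable at x* with v'(x*) = 1 - 1/m, so 0 < v'(x*) < 1. -/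
open Filter Topology

/-! With `ψ x = x - u x`, the map `v` is the Newton map `x ↦ x - ψ x / ψ' x`, and `ψ` has a zero of
order exactly `m` at `x*`. Hence `(v x - x*) / (x - x*) = 1 - ψ x / ((x - x*) ψ' x)`, and `m`-fold
l'Hôpital gives `ψ x / (x - x*) ^ m → ψ⁽ᵐ⁾(x*) / m!` and `ψ' x / (x - x*) ^ (m - 1) → ψ⁽ᵐ⁾(x*) / (m - 1)!`,
so the ratio tends to `1 / m`. -/

theorem tendsto_div_pow_sub_of_iteratedDeriv_eq_zero {n : ℕ} {f : ℝ → ℝ} {a : ℝ}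
    (hf : ContDiffAt ℝ n f a) (hz : ∀ j < n, iteratedDeriv j f a = 0) :
    Tendsto (fun x => f x / (x - a) ^ n) (𝓝[≠] a) (𝓝 (iteratedDeriv n f a / n.factorial)) := by
  induction n generalizing f with
  | zero =>
    simpa using hf.continuousAt.tendsto.mono_left nhdsWithin_le_nhds
  | succ n ih =>
    have hf' : Tendsto (fun x => deriv f x / (x - a) ^ n) (𝓝[≠] a)
        (𝓝 (iteratedDeriv (n + 1) f a / n.factorial)) := by
      rw [iteratedDeriv_succ']
      refine ih (hf.derivWithin (by norm_cast)) fun j hj => ?_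
      rw [← iteratedDeriv_succ']
      exact hz (j + 1) (by omega)
    have hf0 : Tendsto f (𝓝[≠] a) (𝓝 0) := by
      have hfa : f a = 0 := by simpa using hz 0 n.succ_pos
      simpa [hfa] using hf.continuousAt.tendsto.mono_left (nhdsWithin_le_nhds (s := {a}ᶜ))
    have hpow0 : Tendsto (fun x => (x - a) ^ (n + 1)) (𝓝[≠] a) (𝓝 0) := by
      have : Continuous fun x : ℝ => (x - a) ^ (n + 1) := by fun_prop
      simpa using (this.tendsto a).mono_left (nhdsWithin_le_nhds (s := {a}ᶜ))
    have hdiff : ∀ᶠ x in 𝓝[≠] a, HasDerivAt f (deriv f x) x := by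
      filter_upwards [nhdsWithin_le_nhds (hf.eventually (by simp))] with x hx
      exact (hx.differentiableAt (by simp)).hasDerivAt
    have hpow : ∀ᶠ x in 𝓝[≠] a,
        HasDerivAt (fun y => (y - a) ^ (n + 1)) ((n + 1 : ℝ) * (x - a) ^ n) x :=
      Eventually.of_forall fun x => by
        simpa using ((hasDerivAt_id x).sub_const a).fun_pow (n + 1)
    have hpow_ne : ∀ᶠ x in 𝓝[≠] a, (n + 1 : ℝ) * (x - a) ^ n ≠ 0 := by
      filter_upwards [self_mem_nhdsWithin] with x hx
      exact mul_ne_zero (by positivity) (pow_ne_zero _ (sub_ne_zero.2 hx))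
    refine HasDerivAt.lhopital_zero_nhdsNE hdiff hpow hpow_ne hf0 hpow0 ?_
    convert hf'.div_const (n + 1 : ℝ) using 2 with x
    · rw [div_div, mul_comm]
    · push_cast [Nat.factorial_succ]
      rw [div_div, mul_comm]

theorem tendsto_div_sub_mul_deriv_of_iteratedDeriv_eq_zero {n : ℕ} (hn : n ≠ 0) {f : ℝ → ℝ}
    {a : ℝ} (hf : ContDiffAt ℝ n f a) (hz : ∀ j < n, iteratedDeriv j f a = 0)
    (hfn : iteratedDeriv n f a ≠ 0) :
    Tendsto (fun x => f x / ((x - a) * deriv f x)) (𝓝[≠] a) (𝓝 (1 / n)) := by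
  obtain ⟨k, rfl⟩ := Nat.exists_eq_add_one_of_ne_zero hn
  have hf_lim := tendsto_div_pow_sub_of_iteratedDeriv_eq_zero hf hz
  have hderiv_lim : Tendsto (fun x => deriv f x / (x - a) ^ k) (𝓝[≠] a)
      (𝓝 (iteratedDeriv (k + 1) f a / k.factorial)) := by
    rw [iteratedDeriv_succ']
    refine tendsto_div_pow_sub_of_iteratedDeriv_eq_zero (hf.derivWithin (by norm_cast))
      fun j hj => ?_
    rw [← iteratedDeriv_succ']
    exact hz (j + 1) (by omega)
  have hk : (k.factorial : ℝ) ≠ 0 := by positivity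
  have hlim := hf_lim.div hderiv_lim (div_ne_zero hfn hk)
  rw [show iteratedDeriv (k + 1) f a / (k + 1).factorial / (iteratedDeriv (k + 1) f a / k.factorial)
      = 1 / (k + 1 : ℕ) by push_cast [Nat.factorial_succ]; field_simp] at hlim
  refine hlim.congr' ?_
  filter_upwards [self_mem_nhdsWithin] with x hx
  have hxa : x - a ≠ 0 := sub_ne_zero.2 hx
  rw [Pi.div_apply, div_div_eq_mul_div, pow_succ', div_mul_eq_div_div,
    div_mul_cancel₀ _ (pow_ne_zero k hxa), div_div]

/-- `(x * ψ' x - ψ x) / ψ' x` is the Newton step `x - ψ x / ψ' x`, written so that it also matches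
the formula for `v` where `ψ' x = 0`. -/
theorem hasDerivAt_newton_of_iteratedDeriv_eq_zero {n : ℕ} (hn : n ≠ 0) {ψ N : ℝ → ℝ} {a : ℝ}
    (hψ : ContDiffAt ℝ n ψ a) (hz : ∀ j < n, iteratedDeriv j ψ a = 0)
    (hψn : iteratedDeriv n ψ a ≠ 0)
    (hN : ∀ᶠ x in 𝓝[≠] a, N x = (x * deriv ψ x - ψ x) / deriv ψ x) (hNa : N a = a) :
    HasDerivAt N (1 - 1 / n) a := by
  have hratio := tendsto_div_sub_mul_deriv_of_iteratedDeriv_eq_zero hn hψ hz hψn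
  have hderiv_ne : ∀ᶠ x in 𝓝[≠] a, deriv ψ x ≠ 0 := by
    filter_upwards [hratio.eventually_ne (by positivity : (1 / n : ℝ) ≠ 0)] with x hx h0
    simp [h0] at hx
  rw [hasDerivAt_iff_tendsto_slope]
  refine (tendsto_const_nhds.sub hratio).congr' ?_
  filter_upwards [self_mem_nhdsWithin, hN, hderiv_ne] with x hx hNx hψx
  have hxa : x - a ≠ 0 := sub_ne_zero.2 hx
  rw [slope_def_field, hNx, hNa]
  field_simp
  ring

/-- under hypotheses (H), the continuously extended Newton map `v`
is differentiable at `x*` with `v'(x*) = 1 - 1/m ∈ (0,1)`. -/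
theorem stmt_6 (m : ℕ) (hm : 2 ≤ m) (xs α : ℝ) (hα : α ≠ 0) (u v : ℝ → ℝ)
    (hu : ContDiffAt ℝ (m : ℕ∞) u xs) (hfix : u xs = xs) (hu1 : deriv u xs = 1)
    (hj : ∀ j, 2 ≤ j → j ≤ m - 1 → iteratedDeriv j u xs = 0)
    (hum : iteratedDeriv m u xs = α)
    (hv : ∀ x, x ≠ xs → v x = (u x - x * deriv u x) / (1 - deriv u x))
    (hvfix : v xs = xs) :
    HasDerivAt v (1 - 1/(m:ℝ)) xs ∧ 0 < 1 - 1/(m:ℝ) ∧ 1 - 1/(m:ℝ) < 1 := by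
  replace hu : ContDiffAt ℝ m u xs := by exact_mod_cast hu
  have hm0 : m ≠ 0 := by omega
  set ψ : ℝ → ℝ := fun x => x - u x
  have hψ : ContDiffAt ℝ m ψ xs := contDiffAt_id.sub hu
  have hψ_iter : ∀ j ≤ m, iteratedDeriv j ψ xs =
      (if j = 0 then xs else if j = 1 then 1 else 0) - iteratedDeriv j u xs := fun j hjm => by
    rw [iteratedDeriv_fun_sub (f := fun x => x) contDiffAt_id (hu.of_le (by exact_mod_cast hjm)),
      iteratedDeriv_fun_id]
  have hz : ∀ j < m, iteratedDeriv j ψ xs = 0 := by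
    intro j hjm
    rw [hψ_iter j hjm.le]
    rcases j with _ | _ | j
    · simp [hfix]
    · simp [hu1]
    · simp [hj (j + 2) (by omega) (by omega)]
  have hψm : iteratedDeriv m ψ xs = -α := by
    simp [hψ_iter m le_rfl, hum, hm0, show m ≠ 1 by omega]
  have hv_newton : ∀ᶠ x in 𝓝[≠] xs, v x = (x * deriv ψ x - ψ x) / deriv ψ x := by
    filter_upwards [self_mem_nhdsWithin,
      nhdsWithin_le_nhds (hu.eventually (by simp))] with x hx hux
    have hdψ : deriv ψ x = 1 - deriv u x :=
      ((hasDerivAt_id' x).sub (hux.differentiableAt (by exact_mod_cast hm0)).hasDerivAt).deriv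
    rw [hv x hx, hdψ]
    ring
  have hm' : (2 : ℝ) ≤ m := by exact_mod_cast hm
  refine ⟨hasDerivAt_newton_of_iteratedDeriv_eq_zero hm0 hψ hz (by simpa [hψm] using hα)
    hv_newton hvfix, ?_, ?_⟩
  · rw [sub_pos, div_lt_one (by linarith)]
    linarith
  · have : 0 < 1 / (m : ℝ) := by positivity
    linarith
end

section
/- Let u : ℝ → ℝ be C^m near x* satisfying u(x*) = x*, u'(x*) = 1, u^{(j)}(x*) = 0 for 2 ≤ j ≤ m-1, and u^{(m)}(x*) = α ≠ 0 (m ≥ 2). Let v(x) = (u(x) - x u'(x))/(1 - u'(x)) for x ≠ x*, v(x*) = x*, and let w(x) = (v(x) - x v'(x))/(1 - v'(x)). Then w(x*) = x* and w'(x*) = 0, i.e. the standard accelerator w turns x* into a superattracting fixed point. -/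
/-!
Put `f = u - id`. Then `f` has a zero of multiplicity `m` at `x*`, and `v = C(·, u)` is Newton's
map `x - f x / f' x` of `f`. By Taylor's theorem `f`, `f'`, `f''` behave like `c (x - x*) ^ m`,
`m c (x - x*) ^ (m - 1)`, `m (m - 1) c (x - x*) ^ (m - 2)`, so both the slope of `v` at `x*` and
`v' = f f'' / f' ^ 2` tend to `1 - 1 / m`. Hence `x*` is a fixed point of `v` with
`v'(x*) ≠ 1` and `v'` continuous there, and the slope of `w = C(·, v)` at `x*`, namely
`((v x - x*) / (x - x*) - v' x) / (1 - v' x)`, tends to `0`.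
-/

open Filter Topology
open scoped Nat

theorem tendsto_div_sub_pow_of_iteratedDeriv_eq_zero {f : ℝ → ℝ} {a : ℝ} {n : ℕ}
    (hf : ContDiffAt ℝ n f a) (hz : ∀ j < n, iteratedDeriv j f a = 0) :
    Tendsto (fun x => f x / (x - a) ^ n) (𝓝[≠] a) (𝓝 (iteratedDeriv n f a / n !)) := by
  obtain ⟨s, hs, hfs⟩ := hf.contDiffOn le_rfl (by simp)
  obtain ⟨ε, hε, hball⟩ := Metric.mem_nhds_iff.1 hs
  have ha := Metric.mem_ball_self (x := a) hε
  set c := iteratedDeriv n f a / (n ! : ℝ)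
  have htaylor : ∀ x, taylorWithinEval f n (Metric.ball a ε) a x = c * (x - a) ^ n := by
    intro x
    rw [taylor_within_apply, Finset.sum_range_succ, Finset.sum_eq_zero, zero_add,
      iteratedDerivWithin_of_isOpen Metric.isOpen_ball ha, smul_eq_mul]
    · ring
    · intro j hj
      rw [iteratedDerivWithin_of_isOpen Metric.isOpen_ball ha, hz j (Finset.mem_range.1 hj),
        smul_zero]
  have hrem := Real.taylor_tendsto (convex_ball a ε) ha (hfs.mono hball)
  rw [Metric.isOpen_ball.nhdsWithin_eq ha] at hrem
  have hlim := (hrem.mono_left (nhdsWithin_le_nhds (s := {a}ᶜ))).add_const c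
  rw [zero_add] at hlim
  refine hlim.congr' ?_
  filter_upwards [self_mem_nhdsWithin] with x (hx : x ≠ a)
  rw [htaylor]
  field_simp [sub_ne_zero.2 hx]
  ring

theorem tendsto_deriv_div_sub_pow_of_iteratedDeriv_eq_zero {f : ℝ → ℝ} {a : ℝ} {n : ℕ}
    (hf : ContDiffAt ℝ (n + 1) f a) (hz : ∀ j < n + 1, iteratedDeriv j f a = 0) :
    Tendsto (fun x => deriv f x / (x - a) ^ n) (𝓝[≠] a)
      (𝓝 (iteratedDeriv (n + 1) f a / n !)) := by
  rw [iteratedDeriv_succ']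
  refine tendsto_div_sub_pow_of_iteratedDeriv_eq_zero (hf.derivWithin le_rfl) fun j hj => ?_
  rw [← iteratedDeriv_succ']
  exact hz (j + 1) (by omega)

noncomputable def newtonMap (f : ℝ → ℝ) (x : ℝ) : ℝ := x - f x / deriv f x

theorem newtonMap_eq_self_of_eq_zero {f : ℝ → ℝ} {a : ℝ} (ha : f a = 0) :
    newtonMap f a = a := by
  simp [newtonMap, ha]

theorem hasDerivAt_newtonMap {f : ℝ → ℝ} {x f' f'' : ℝ} (hf : HasDerivAt f f' x)
    (hf' : HasDerivAt (deriv f) f'' x) (h : f' ≠ 0) :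
    HasDerivAt (newtonMap f) (f x * f'' / f' ^ 2) x := by
  have hN : HasDerivAt (newtonMap f) (1 - (f' * deriv f x - f x * f'') / deriv f x ^ 2) x :=
    (hasDerivAt_id' x).fun_sub (hf.fun_div hf' (hf.deriv ▸ h))
  refine hN.congr_deriv ?_
  rw [hf.deriv]
  field_simp
  ring

section MultipleRoot

variable {f : ℝ → ℝ} {a : ℝ} {n : ℕ}

theorem eventually_deriv_ne_zero_of_iteratedDeriv_eq_zero (hf : ContDiffAt ℝ (n + 1) f a)
    (hz : ∀ j < n + 1, iteratedDeriv j f a = 0) (hc : iteratedDeriv (n + 1) f a ≠ 0) :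
    ∀ᶠ x in 𝓝[≠] a, deriv f x ≠ 0 := by
  filter_upwards [(tendsto_deriv_div_sub_pow_of_iteratedDeriv_eq_zero hf hz).eventually_ne
    (div_ne_zero hc (by positivity))] with x hx hx0
  simp [hx0] at hx

theorem hasDerivAt_newtonMap_of_iteratedDeriv_eq_zero (hf : ContDiffAt ℝ (n + 1) f a)
    (hz : ∀ j < n + 1, iteratedDeriv j f a = 0) (hc : iteratedDeriv (n + 1) f a ≠ 0) :
    HasDerivAt (newtonMap f) (n / (n + 1)) a := by
  set c := iteratedDeriv (n + 1) f a
  have hlim := tendsto_const_nhds (x := (1 : ℝ)) |>.sub <|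
    (tendsto_div_sub_pow_of_iteratedDeriv_eq_zero hf hz).div
      (tendsto_deriv_div_sub_pow_of_iteratedDeriv_eq_zero hf hz) (div_ne_zero hc (by positivity))
  have hval : 1 - c / ((n + 1) ! : ℝ) / (c / (n ! : ℝ)) = n / (n + 1) := by
    push_cast [Nat.factorial_succ]
    field_simp
    ring
  rw [hval] at hlim
  rw [hasDerivAt_iff_tendsto_slope]
  refine hlim.congr' ?_
  filter_upwards [self_mem_nhdsWithin, eventually_deriv_ne_zero_of_iteratedDeriv_eq_zero hf hz hc]
    with x (hx : x ≠ a) hdx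
  rw [Pi.div_apply, slope_def_field,
    newtonMap_eq_self_of_eq_zero (a := a) (by simpa using hz 0 (by omega)), newtonMap]
  field_simp [sub_ne_zero.2 hx]
  ring

theorem tendsto_deriv_newtonMap_of_iteratedDeriv_eq_zero {k : ℕ} (hf : ContDiffAt ℝ (k + 2) f a)
    (hz : ∀ j < k + 2, iteratedDeriv j f a = 0) (hc : iteratedDeriv (k + 2) f a ≠ 0) :
    Tendsto (deriv (newtonMap f)) (𝓝[≠] a) (𝓝 ((k + 1) / (k + 2))) := by
  set c := iteratedDeriv (k + 2) f a
  have hf' : ContDiffAt ℝ (k + 1) (deriv f) a := hf.derivWithin le_rfl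
  have h2 : Tendsto (fun x => deriv (deriv f) x / (x - a) ^ k) (𝓝[≠] a) (𝓝 (c / k !)) := by
    have h := tendsto_deriv_div_sub_pow_of_iteratedDeriv_eq_zero hf' fun j hj => by
      rw [← iteratedDeriv_succ']; exact hz (j + 1) (by omega)
    rwa [← iteratedDeriv_succ'] at h
  have hlim := ((tendsto_div_sub_pow_of_iteratedDeriv_eq_zero hf hz).mul h2).div
    ((tendsto_deriv_div_sub_pow_of_iteratedDeriv_eq_zero hf hz).pow 2)
    (pow_ne_zero 2 (div_ne_zero hc (by positivity)))
  have hval :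
      c / ((k + 2) ! : ℝ) * (c / k !) / (c / ((k + 1) ! : ℝ)) ^ 2 = (k + 1) / (k + 2) := by
    push_cast [Nat.factorial_succ]
    field_simp
    ring
  rw [hval] at hlim
  refine hlim.congr' ?_
  have hsmooth : ∀ᶠ y in 𝓝 a, ContDiffAt ℝ 2 f y :=
    (hf.of_le (by norm_cast; omega)).eventually (by simp)
  filter_upwards [self_mem_nhdsWithin, nhdsWithin_le_nhds hsmooth,
    eventually_deriv_ne_zero_of_iteratedDeriv_eq_zero hf hz hc] with x (hx : x ≠ a) hfx hdx
  have hN := hasDerivAt_newtonMap (hfx.differentiableAt (by simp)).hasDerivAt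
    ((hfx.derivWithin (m := 1) (by norm_num)).differentiableAt (by simp)).hasDerivAt hdx
  rw [hN.deriv, Pi.div_apply]
  field_simp [sub_ne_zero.2 hx]
  ring

end MultipleRoot

/-- The paper's `C(x, u)`. -/
noncomputable def accelerator (u : ℝ → ℝ) (x : ℝ) : ℝ :=
  (u x - x * deriv u x) / (1 - deriv u x)

section Accelerator

variable {u : ℝ → ℝ} {a μ : ℝ}

theorem accelerator_eq_newtonMap_sub_id {x : ℝ} (h : deriv (fun y => u y - y) x ≠ 0) :
    accelerator u x = newtonMap (fun y => u y - y) x := by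
  have hu : DifferentiableAt ℝ u x := by
    simpa using (differentiableAt_of_deriv_ne_zero h).add differentiableAt_id
  have hd : deriv (fun y => u y - y) x = deriv u x - 1 := by
    rw [deriv_fun_sub hu differentiableAt_fun_id, deriv_id'']
  rw [hd] at h
  have h1 : 1 - deriv u x ≠ 0 := fun h' => h (by linarith)
  rw [accelerator, newtonMap, hd]
  field_simp
  ring

theorem accelerator_eq_self_of_hasDerivAt (hu : HasDerivAt u μ a) (hua : u a = a)
    (hμ : μ ≠ 1) :
    accelerator u a = a := by
  have h1 : 1 - μ ≠ 0 := sub_ne_zero.2 hμ.symm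
  rw [accelerator, hu.deriv, hua]
  field_simp

theorem hasDerivAt_accelerator_zero (hu : HasDerivAt u μ a) (hua : u a = a) (hμ : μ ≠ 1)
    (hdu : Tendsto (deriv u) (𝓝[≠] a) (𝓝 μ)) : HasDerivAt (accelerator u) 0 a := by
  have hden : Tendsto (fun x => 1 - deriv u x) (𝓝[≠] a) (𝓝 (1 - μ)) :=
    tendsto_const_nhds.sub hdu
  have hlim := ((hasDerivAt_iff_tendsto_slope.1 hu).sub hdu).div hden (sub_ne_zero.2 hμ.symm)
  rw [sub_self, zero_div] at hlim
  rw [hasDerivAt_iff_tendsto_slope]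
  refine hlim.congr' ?_
  filter_upwards [self_mem_nhdsWithin, hden.eventually_ne (sub_ne_zero.2 hμ.symm)]
    with x (hx : x ≠ a) hdx
  simp only [Pi.div_apply, slope_def_field]
  rw [accelerator_eq_self_of_hasDerivAt hu hua hμ, accelerator, hua]
  field_simp [sub_ne_zero.2 hx]
  ring

theorem hasDerivAt_and_tendsto_deriv_of_eq_accelerator {v : ℝ → ℝ} {k : ℕ}
    (hf : ContDiffAt ℝ (k + 2) (fun x => u x - x) a)
    (hz : ∀ j < k + 2, iteratedDeriv j (fun x => u x - x) a = 0)
    (hc : iteratedDeriv (k + 2) (fun x => u x - x) a ≠ 0)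
    (hv : ∀ x ≠ a, v x = accelerator u x) (hva : v a = a) :
    HasDerivAt v ((k + 1) / (k + 2)) a ∧
      Tendsto (deriv v) (𝓝[≠] a) (𝓝 ((k + 1) / (k + 2))) := by
  -- `accelerator u a` is a junk value (`1 - u' a = 0`); the Newton map agrees with `v` at `a` too.
  have hvN : v =ᶠ[𝓝 a] newtonMap (fun x => u x - x) := by
    rw [EventuallyEq, ← nhdsNE_sup_pure a, eventually_sup]
    refine ⟨?_, ?_⟩
    · filter_upwards [self_mem_nhdsWithin,
        eventually_deriv_ne_zero_of_iteratedDeriv_eq_zero hf hz hc] with x hx hdx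
      rw [hv x hx, accelerator_eq_newtonMap_sub_id hdx]
    · rw [eventually_pure, hva, newtonMap_eq_self_of_eq_zero (by simpa using hz 0 (by omega))]
  have hf' : ContDiffAt ℝ ((k + 1 : ℕ) + 1) (fun x => u x - x) a := by
    rwa [Nat.cast_add, Nat.cast_one, add_assoc, one_add_one_eq_two]
  refine ⟨?_, ?_⟩
  · refine ((hasDerivAt_newtonMap_of_iteratedDeriv_eq_zero hf' hz hc).congr_of_eventuallyEq
      hvN).congr_deriv ?_
    push_cast
    ring
  · refine (tendsto_deriv_newtonMap_of_iteratedDeriv_eq_zero hf hz hc).congr' ?_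
    filter_upwards [nhdsWithin_le_nhds hvN.eventuallyEq_nhds] with x hx using hx.deriv_eq.symm

end Accelerator

/-- the standard accelerator `w = C(x, v)`, with `v = C(x, u)` the
extended Newton map of `u` satisfying (H), has a superattracting fixed point at `x*`. -/
theorem stmt_7 (m : ℕ) (hm : 2 ≤ m) (xs α : ℝ) (hα : α ≠ 0) (u v w : ℝ → ℝ)
    (hu : ContDiffAt ℝ (m : ℕ∞) u xs) (hfix : u xs = xs) (hu1 : deriv u xs = 1)
    (hj : ∀ j, 2 ≤ j → j ≤ m - 1 → iteratedDeriv j u xs = 0)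
    (hum : iteratedDeriv m u xs = α)
    (hv : ∀ x, x ≠ xs → v x = (u x - x * deriv u x) / (1 - deriv u x))
    (hvfix : v xs = xs)
    (hw : ∀ x, w x = (v x - x * deriv v x) / (1 - deriv v x)) :
    w xs = xs ∧ deriv w xs = 0 := by
  obtain ⟨k, rfl⟩ : ∃ k, m = k + 2 := ⟨m - 2, by omega⟩
  have hu' : ContDiffAt ℝ (k + 2) u xs := by exact_mod_cast hu
  have hsub : ∀ j ≤ k + 2, iteratedDeriv j (fun x => u x - x) xs =
      iteratedDeriv j u xs - if j = 0 then xs else if j = 1 then 1 else 0 := fun j hjk => by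
    rw [show (fun x => u x - x) = u - id from rfl,
      iteratedDeriv_sub (hu'.of_le (by exact_mod_cast hjk)) contDiffAt_id, iteratedDeriv_id]
  have hz : ∀ j < k + 2, iteratedDeriv j (fun x => u x - x) xs = 0 := fun j hjk => by
    rw [hsub j hjk.le]
    rcases j with _ | _ | j
    · simp [hfix]
    · simp [hu1]
    · simp [hj (j + 2) (by omega) (by omega)]
  have hc : iteratedDeriv (k + 2) (fun x => u x - x) xs ≠ 0 := by
    simpa [hsub _ le_rfl, hum] using hα
  obtain ⟨hv', hdv⟩ := hasDerivAt_and_tendsto_deriv_of_eq_accelerator (hu'.sub contDiffAt_id)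
    hz hc hv hvfix
  have hμ : ((k : ℝ) + 1) / (k + 2) ≠ 1 := by
    rw [Ne, div_eq_one_iff_eq (by positivity)]
    linarith
  rw [show w = accelerator v from funext hw]
  exact ⟨accelerator_eq_self_of_hasDerivAt hv' hvfix hμ,
    (hasDerivAt_accelerator_zero hv' hvfix hμ hdv).deriv⟩
end

section
/- Let x* ∈ ℝ, α ≠ 0, β ∉ {0, 1}, and define u(x) = x + α(x* - x)^β for x < x* (so that x* - x > 0). Then the Newton map v(x) = (u(x) - x·u'(x))/(1 - u'(x)) is the affine function v(x) = (1 - 1/β)x + (1/β)x* for x near but below x*, and consequently the standard accelerator w(x) = (v(x) - x v'(x))/(1 - v'(x)) satisfies w(x) = x* for all such x. -/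
open Filter Set

lemma aux_deriv_u (xs α β : ℝ) (u : ℝ → ℝ)
    (hu : ∀ x, x < xs → u x = x + α * (xs - x) ^ β)
    {x : ℝ} (hx : x < xs) :
    deriv u x = 1 - α * β * (xs - x) ^ (β - 1) := by
  have hmem : Iio xs ∈ nhds x := Iio_mem_nhds hx
  have heq : u =ᶠ[nhds x] fun y => y + α * (xs - y) ^ β :=
    Filter.eventually_of_mem hmem (fun y hy => hu y hy)
  rw [heq.deriv_eq]
  have hpos : (0:ℝ) < xs - x := sub_pos.mpr hx
  have h1 : HasDerivAt (fun y : ℝ => xs - y) (-1) x := by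
    simpa using (hasDerivAt_id x).const_sub xs
  have h2 : HasDerivAt (fun y : ℝ => (xs - y) ^ β)
      (β * (xs - x) ^ (β - 1) * (-1)) x :=
    (Real.hasDerivAt_rpow_const (p := β) (Or.inl hpos.ne')).comp x h1
  have h3 : HasDerivAt (fun y : ℝ => y + α * (xs - y) ^ β)
      (1 + α * (β * (xs - x) ^ (β - 1) * (-1))) x :=
    (hasDerivAt_id x).add (h2.const_mul α)
  rw [h3.deriv]; ring

/-- for `u(x) = x + α(x* - x)^β` (`x < x*`), the Newton map is
affine and the standard accelerator is constantly `x*`. -/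
theorem stmt_10 (xs α β : ℝ) (hα : α ≠ 0) (hβ0 : β ≠ 0) (hβ1 : β ≠ 1)
    (u v w : ℝ → ℝ)
    (hu : ∀ x, x < xs → u x = x + α * (xs - x) ^ β)
    (hv : ∀ x, x < xs → v x = (u x - x * deriv u x) / (1 - deriv u x))
    (hw : ∀ x, x < xs → w x = (v x - x * deriv v x) / (1 - deriv v x)) :
    ∀ x, x < xs → v x = (1 - 1/β) * x + (1/β) * xs ∧ w x = xs := by
  -- first: v is affine on Iio xs
  have hvaff : ∀ x, x < xs → v x = (1 - 1/β) * x + (1/β) * xs := by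
    intro x hx
    have hpos : (0:ℝ) < xs - x := sub_pos.mpr hx
    have hpow : (0:ℝ) < (xs - x) ^ (β - 1) := Real.rpow_pos_of_pos hpos _
    have hsplit : (xs - x) ^ β = (xs - x) ^ (β - 1) * (xs - x) := by
      rw [← Real.rpow_add_one hpos.ne' (β - 1)]; ring_nf
    rw [hv x hx, hu x hx, aux_deriv_u xs α β u hu hx, hsplit]
    field_simp
    ring
  intro x hx
  refine ⟨hvaff x hx, ?_⟩
  have hmem : Iio xs ∈ nhds x := Iio_mem_nhds hx
  have heq : v =ᶠ[nhds x] fun y => (1 - 1/β) * y + (1/β) * xs :=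
    Filter.eventually_of_mem hmem (fun y hy => hvaff y hy)
  have hdv : deriv v x = 1 - 1/β := by
    rw [heq.deriv_eq]
    have : HasDerivAt (fun y : ℝ => (1 - 1/β) * y + (1/β) * xs) (1 - 1/β) x := by
      simpa using ((hasDerivAt_id x).const_mul (1 - 1/β)).add_const ((1/β) * xs)
    exact this.deriv
  rw [hw x hx, hdv, hvaff x hx]
  field_simp
  ring
end
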